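/- Let u ≥ 0 be sufficiently small, and suppose y₃, y₄ ∈ ℝ² satisfy: y₃ lies in the closed lens B((0,0), √2+2u) ∩ B((2,0), √2+2u), y₃ has positive second coordinate, y₄ lies in the same lens, and ‖y₃ − y₄‖ ≥ 2. Then y₄ has negative second coordinate, and there exists a constant β > 0 independent of u such that ‖y₃ − (1,1)‖ ≤ βu and ‖y₄ − (1,−1)‖ ≤ βu. -/

import Mathlib

/-- The point `(a, b)` of the Euclidean plane. -/
noncomputable def pt (a b : ℝ) : EuclideanSpace ℝ (Fin 2) :=
  (WithLp.equiv 2 (Fin 2 → ℝ)).symm ![a, b]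

/-!
Write a point of the lens as `(1 ± a, q)` with `a ≥ 0`; lying in both discs says exactly
`(1 + a)² + q² ≤ r² = 2 + δ`, where `δ = O(u)`. For two such points `(1 ± a, q)`, `(1 ± b, t)`,
inserting `(q - t)² = 2q² + 2t² - (q + t)²` into `4 ≤ ‖y₃ - y₄‖² ≤ (a + b)² + (q - t)²` gives
`4(a + b) + (a - b)² + (q + t)² ≤ 4δ`, so `a + b ≤ δ`. Then `q, |t| ≤ 1 + δ/2` while
`q - t ≥ √(4 - δ²) ≥ 2 - δ²`, which pins `q` near `1` and `t` near `-1`, up to `δ`.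
-/

namespace EuclideanSpace

lemma norm_sq_eq_fin_two (x : EuclideanSpace ℝ (Fin 2)) : ‖x‖ ^ 2 = x 0 ^ 2 + x 1 ^ 2 := by
  simp [EuclideanSpace.norm_sq_eq, Fin.sum_univ_two]

lemma norm_le_abs_add_abs_fin_two (x : EuclideanSpace ℝ (Fin 2)) : ‖x‖ ≤ |x 0| + |x 1| := by
  refine le_of_sq_le_sq ?_ (by positivity)
  rw [norm_sq_eq_fin_two]
  nlinarith [sq_abs (x 0), sq_abs (x 1), abs_nonneg (x 0), abs_nonneg (x 1)]

lemma norm_sub_sq_le_abs_sub_add_abs_sub_sq (y₃ y₄ : EuclideanSpace ℝ (Fin 2)) (c : ℝ) :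
    ‖y₃ - y₄‖ ^ 2 ≤ (|y₃ 0 - c| + |y₄ 0 - c|) ^ 2 + (y₃ 1 - y₄ 1) ^ 2 := by
  have h : |y₃ 0 - y₄ 0| ≤ |y₃ 0 - c| + |y₄ 0 - c| :=
    (abs_sub_le _ c _).trans_eq (by rw [abs_sub_comm c])
  rw [norm_sq_eq_fin_two]
  simp only [PiLp.sub_apply]
  nlinarith [sq_abs (y₃ 0 - y₄ 0), abs_nonneg (y₃ 0 - y₄ 0)]

end EuclideanSpace

open EuclideanSpace

@[simp] lemma pt_apply_zero (a b : ℝ) : pt a b 0 = a := rfl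

@[simp] lemma pt_apply_one (a b : ℝ) : pt a b 1 = b := rfl

lemma one_add_abs_sub_one_sq_add_sq_le_of_mem_lens {y : EuclideanSpace ℝ (Fin 2)} {r : ℝ}
    (hy : y ∈ Metric.closedBall (pt 0 0) r ∩ Metric.closedBall (pt 2 0) r) :
    (1 + |y 0 - 1|) ^ 2 + y 1 ^ 2 ≤ r ^ 2 := by
  obtain ⟨h₀, h₂⟩ := hy
  rw [Metric.mem_closedBall, dist_eq_norm] at h₀ h₂
  have e₀ := norm_sq_eq_fin_two (y - pt 0 0)
  have e₂ := norm_sq_eq_fin_two (y - pt 2 0)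
  simp only [PiLp.sub_apply, pt_apply_zero, pt_apply_one, sub_zero] at e₀ e₂
  have s₀ := pow_le_pow_left₀ (norm_nonneg _) h₀ 2
  have s₂ := pow_le_pow_left₀ (norm_nonneg _) h₂ 2
  rcases abs_cases (y 0 - 1) with ⟨h, -⟩ | ⟨h, -⟩ <;> rw [h] <;> nlinarith

lemma lens_antipodal {a b q t δ : ℝ} (ha : 0 ≤ a) (hb : 0 ≤ b) (hδ : δ ≤ 1 / 10)
    (h₃ : (1 + a) ^ 2 + q ^ 2 ≤ 2 + δ) (h₄ : (1 + b) ^ 2 + t ^ 2 ≤ 2 + δ) (hq : 0 < q)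
    (hd : 4 ≤ (a + b) ^ 2 + (q - t) ^ 2) :
    t < 0 ∧ a + b ≤ δ ∧ |q - 1| ≤ δ ∧ |t + 1| ≤ δ := by
  have hab : a + b ≤ δ := by nlinarith [sq_nonneg (a - b), sq_nonneg (q + t)]
  have hδ₀ : 0 ≤ δ := by linarith
  have hδ_sq : δ ^ 2 ≤ δ / 10 := by nlinarith
  have hq_le : q ≤ 1 + δ / 2 := by nlinarith
  have ht_le : -(1 + δ / 2) ≤ t ∧ t ≤ 1 + δ / 2 :=
    abs_le_of_sq_le_sq' (by nlinarith) (by linarith)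
  have hqt : 2 - δ ^ 2 ≤ q - t := by
    have hqt_sq : 4 - δ ^ 2 ≤ (q - t) ^ 2 := by
      linarith [pow_le_pow_left₀ (by linarith) hab 2]
    by_contra! h
    have hpos : 0 < (2 - δ ^ 2 - (q - t)) * (2 - δ ^ 2 + (q - t)) :=
      mul_pos (by linarith) (by linarith)
    nlinarith
  exact ⟨by linarith, hab, abs_le.mpr ⟨by linarith, by linarith⟩,
    abs_le.mpr ⟨by linarith, by linarith⟩⟩

theorem stmt_10 :
    ∃ β : ℝ, 0 < β ∧ ∃ u₀ : ℝ, 0 < u₀ ∧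
      ∀ u : ℝ, 0 ≤ u → u ≤ u₀ →
      ∀ y₃ y₄ : EuclideanSpace ℝ (Fin 2),
        y₃ ∈ Metric.closedBall (pt 0 0) (Real.sqrt 2 + 2 * u) ∩
              Metric.closedBall (pt 2 0) (Real.sqrt 2 + 2 * u) →
        0 < y₃ 1 →
        y₄ ∈ Metric.closedBall (pt 0 0) (Real.sqrt 2 + 2 * u) ∩
              Metric.closedBall (pt 2 0) (Real.sqrt 2 + 2 * u) →
        2 ≤ ‖y₃ - y₄‖ →
        y₄ 1 < 0 ∧ ‖y₃ - pt 1 1‖ ≤ β * u ∧ ‖y₄ - pt 1 (-1)‖ ≤ β * u := by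
  refine ⟨14, by norm_num, 1 / 70, by norm_num, fun u hu hu₀ y₃ y₄ hy₃ hq hy₄ hd ↦ ?_⟩
  -- `(√2 + 2u)² = 2 + 4√2 u + 4u² ≤ 2 + 6u + 4u²`, and `4u² ≤ u` for small `u`.
  have hr : (Real.sqrt 2 + 2 * u) ^ 2 ≤ 2 + 7 * u := by
    nlinarith [Real.sq_sqrt (show (0 : ℝ) ≤ 2 by norm_num),
      Real.sqrt_le_iff.mpr (show (0 : ℝ) ≤ 3 / 2 ∧ 2 ≤ (3 / 2) ^ 2 by norm_num)]
  obtain ⟨ht, hab, hq₁, ht₁⟩ := lens_antipodal (abs_nonneg _) (abs_nonneg _) (by linarith)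
    ((one_add_abs_sub_one_sq_add_sq_le_of_mem_lens hy₃).trans hr)
    ((one_add_abs_sub_one_sq_add_sq_le_of_mem_lens hy₄).trans hr) hq
    ((by nlinarith : (4 : ℝ) ≤ ‖y₃ - y₄‖ ^ 2).trans
      (norm_sub_sq_le_abs_sub_add_abs_sub_sq y₃ y₄ 1))
  refine ⟨ht, ?_, ?_⟩
  · calc ‖y₃ - pt 1 1‖ ≤ |y₃ 0 - 1| + |y₃ 1 - 1| := norm_le_abs_add_abs_fin_two _
      _ ≤ 14 * u := by linarith [abs_nonneg (y₄ 0 - 1)]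
  · calc ‖y₄ - pt 1 (-1)‖ ≤ |y₄ 0 - 1| + |y₄ 1 + 1| := by
          simpa using norm_le_abs_add_abs_fin_two (y₄ - pt 1 (-1))
      _ ≤ 14 * u := by linarith [abs_nonneg (y₃ 0 - 1)]
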